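/- arXiv:2604.26972 — 6 statements merged into one kernel-verified Lean document; each statement's English description precedes it below -/
import Mathlib

section
/- Let r be a multivariate real polynomial in m variables, and define the two-sheet function F : ℝ^m × ℝ → ℝ by F(y, s) = 1 − (r(y)² + (s² − 1)²). Then r has a real root (there exists a ∈ ℝ^m with r(a) = 0) if and only if there exist two points p, q ∈ ℝ^m × ℝ such that F(p) ≥ 1, F(q) ≥ 1, and F((p + q)/2) < 1, where (p + q)/2 denotes the midpoint of p and q. -/
/-- The two-sheet function `F(y, s) = 1 − (r(y)² + (s² − 1)²)`. -/
noncomputable def twoSheet (m : ℕ) (r : MvPolynomial (Fin m) ℝ)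
    (p : (Fin m → ℝ) × ℝ) : ℝ :=
  1 - ((MvPolynomial.eval p.1 r) ^ 2 + (p.2 ^ 2 - 1) ^ 2)

/-- `r` has a real root iff there exist `p, q ∈ ℝ^m × ℝ` with
`F(p) ≥ 1`, `F(q) ≥ 1` and `F((p + q)/2) < 1`. -/
theorem stmt4 (m : ℕ) (r : MvPolynomial (Fin m) ℝ) :
    (∃ a : Fin m → ℝ, MvPolynomial.eval a r = 0) ↔
      ∃ p q : (Fin m → ℝ) × ℝ,
        twoSheet m r p ≥ 1 ∧ twoSheet m r q ≥ 1 ∧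
        twoSheet m r ((p + q) / 2) < 1 := by
  constructor
  · rintro ⟨a, ha⟩
    refine ⟨(a, 1), (a, -1), ?_, ?_, ?_⟩
    · simp [twoSheet, ha]
    · simp [twoSheet, ha]
    · have h1 : (((a, 1) : (Fin m → ℝ) × ℝ) + (a, -1)) / 2 = (a, 0) := by
        ext x
        · simp [Prod.add_def]
        · simp [Prod.add_def]
      rw [h1]
      simp [twoSheet, ha]
  · rintro ⟨p, q, hp, hq, hpq⟩
    refine ⟨p.1, ?_⟩
    have h1 : (MvPolynomial.eval p.1 r) ^ 2 ≤ 0 := by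
      unfold twoSheet at hp
      nlinarith [sq_nonneg (p.2 ^ 2 - 1)]
    have h2 : (MvPolynomial.eval p.1 r) ^ 2 = 0 :=
      le_antisymm h1 (sq_nonneg _)
    exact pow_eq_zero_iff (by norm_num) |>.mp h2
end

section
/- Let r be a multivariate real polynomial in m variables, let F(y, s) = 1 − (r(y)² + (s² − 1)²), and let L = {(y, s) ∈ ℝ^m × ℝ | F(y, s) ≥ 1}. If y₀ ∈ ℝ^m satisfies r(y₀) = 0, then both (y₀, 1) and (y₀, −1) belong to L, and the connected component of (y₀, 1) within L is distinct from the connected component of (y₀, −1) within L; in particular L is nonempty and not a connected subset of ℝ^m × ℝ. -/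
/-- The super-level set `L = {(y, s) | F(y, s) ≥ 1}`. -/
noncomputable def sheetL (m : ℕ) (r : MvPolynomial (Fin m) ℝ) :
    Set ((Fin m → ℝ) × ℝ) :=
  {p | twoSheet m r p ≥ 1}

lemma sheetL_snd_sq (m : ℕ) (r : MvPolynomial (Fin m) ℝ) {p : (Fin m → ℝ) × ℝ}
    (hp : p ∈ sheetL m r) : p.2 ^ 2 = 1 := by
  have : (1 : ℝ) ≤ 1 - ((MvPolynomial.eval p.1 r) ^ 2 + (p.2 ^ 2 - 1) ^ 2) := hp
  nlinarith [sq_nonneg (MvPolynomial.eval p.1 r), sq_nonneg (p.2 ^ 2 - 1)]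

lemma no_connecting (m : ℕ) (r : MvPolynomial (Fin m) ℝ) (y₀ : Fin m → ℝ)
    {t : Set ((Fin m → ℝ) × ℝ)} (ht : t ⊆ sheetL m r) (hc : IsPreconnected t)
    (h1 : (y₀, (1 : ℝ)) ∈ t) (h2 : (y₀, (-1 : ℝ)) ∈ t) : False := by
  have himg : IsPreconnected (Prod.snd '' t) := hc.image _ continuous_snd.continuousOn
  have h0 : (0 : ℝ) ∈ Prod.snd '' t := by
    have := himg.Icc_subset (a := (-1 : ℝ)) (b := 1)
      ⟨_, h2, rfl⟩ ⟨_, h1, rfl⟩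
    exact this (by norm_num)
  obtain ⟨p, hp, hps⟩ := h0
  have := sheetL_snd_sq m r (ht hp)
  rw [hps] at this
  norm_num at this

/-- if `r(y₀) = 0`, then `(y₀, 1)` and `(y₀, −1)` belong to `L`,
their connected components within `L` are distinct, and in particular `L` is
nonempty and not a connected subset of `ℝ^m × ℝ`. -/
theorem stmt7 (m : ℕ) (r : MvPolynomial (Fin m) ℝ)
    (y₀ : Fin m → ℝ) (h : MvPolynomial.eval y₀ r = 0) :
    (y₀, (1 : ℝ)) ∈ sheetL m r ∧ (y₀, (-1 : ℝ)) ∈ sheetL m r ∧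
    connectedComponentIn (sheetL m r) (y₀, (1 : ℝ)) ≠
      connectedComponentIn (sheetL m r) (y₀, (-1 : ℝ)) ∧
    (sheetL m r).Nonempty ∧ ¬IsConnected (sheetL m r) := by
  have h1 : (y₀, (1 : ℝ)) ∈ sheetL m r := by
    simp [sheetL, twoSheet, h]
  have h2 : (y₀, (-1 : ℝ)) ∈ sheetL m r := by
    simp [sheetL, twoSheet, h]
  refine ⟨h1, h2, ?_, ⟨_, h1⟩, ?_⟩
  · intro heq
    have hm1 : (y₀, (-1 : ℝ)) ∈ connectedComponentIn (sheetL m r) (y₀, (1 : ℝ)) := by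
      rw [heq]; exact mem_connectedComponentIn h2
    exact no_connecting m r y₀ (connectedComponentIn_subset _ _)
      (isPreconnected_connectedComponentIn)
      (mem_connectedComponentIn h1) hm1
  · intro hC
    exact no_connecting m r y₀ (subset_refl _) hC.isPreconnected h1 h2
end

section
/- Let r be a multivariate real polynomial in m variables, let F(y, s) = 1 − (r(y)² + (s² − 1)²), and let L = {(y, s) ∈ ℝ^m × ℝ | F(y, s) ≥ 1}. Then the following are equivalent: (i) there exist points p, q ∈ L whose connected components within L are distinct (i.e. L has at least two connected components); (ii) r has a real root, i.e. there exists a ∈ ℝ^m with r(a) = 0. -/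
lemma mem_sheetL_iff (m : ℕ) (r : MvPolynomial (Fin m) ℝ) (p : (Fin m → ℝ) × ℝ) :
    p ∈ sheetL m r ↔ MvPolynomial.eval p.1 r = 0 ∧ p.2 ^ 2 = 1 := by
  simp only [sheetL, twoSheet, Set.mem_setOf_eq]
  constructor
  · intro h
    constructor
    · nlinarith [sq_nonneg (MvPolynomial.eval p.1 r), sq_nonneg (p.2 ^ 2 - 1)]
    · nlinarith [sq_nonneg (MvPolynomial.eval p.1 r), sq_nonneg (p.2 ^ 2 - 1)]
  · rintro ⟨h1, h2⟩
    rw [h1, h2]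
    norm_num

/-- `L` has two points with distinct connected components within
`L` (i.e. at least two connected components) iff `r` has a real root. -/
theorem stmt8 (m : ℕ) (r : MvPolynomial (Fin m) ℝ) :
    (∃ p ∈ sheetL m r, ∃ q ∈ sheetL m r,
        connectedComponentIn (sheetL m r) p ≠ connectedComponentIn (sheetL m r) q) ↔
      ∃ a : Fin m → ℝ, MvPolynomial.eval a r = 0 := by
  constructor
  · rintro ⟨p, hp, -⟩
    exact ⟨p.1, ((mem_sheetL_iff m r p).1 hp).1⟩
  · rintro ⟨a, ha⟩
    refine ⟨(a, 1), ?_, (a, -1), ?_, ?_⟩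
    · rw [mem_sheetL_iff]; simp [ha]
    · rw [mem_sheetL_iff]; simp [ha]
    · intro heq
      have hq : ((a, -1) : (Fin m → ℝ) × ℝ) ∈ sheetL m r := by
        rw [mem_sheetL_iff]; simp [ha]
      have hp : ((a, 1) : (Fin m → ℝ) × ℝ) ∈ sheetL m r := by
        rw [mem_sheetL_iff]; simp [ha]
      set C := connectedComponentIn (sheetL m r) (a, 1) with hC
      have hpC : ((a, 1) : (Fin m → ℝ) × ℝ) ∈ C := mem_connectedComponentIn hp
      have hqC : ((a, -1) : (Fin m → ℝ) × ℝ) ∈ C := by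
        rw [hC]; rw [← hC, heq]; exact mem_connectedComponentIn hq
      have hCL : C ⊆ sheetL m r := connectedComponentIn_subset _ _
      have hconn : IsPreconnected C := isPreconnected_connectedComponentIn
      have himg : IsPreconnected (Prod.snd '' C) :=
        hconn.image _ continuous_snd.continuousOn
      have h1 : (1 : ℝ) ∈ Prod.snd '' C := ⟨_, hpC, rfl⟩
      have h2 : (-1 : ℝ) ∈ Prod.snd '' C := ⟨_, hqC, rfl⟩
      have h0 : (0 : ℝ) ∈ Prod.snd '' C := by
        have := himg.ordConnected.out h2 h1
        exact this (by norm_num : (0:ℝ) ∈ Set.Icc (-1:ℝ) 1)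
      obtain ⟨x, hxC, hx0⟩ := h0
      have := ((mem_sheetL_iff m r x).1 (hCL hxC)).2
      rw [hx0] at this
      norm_num at this
end

section
/- Let r be a multivariate real polynomial in m variables, let F(y, s) = 1 − (r(y)² + (s² − 1)²), and let L = {(y, s) ∈ ℝ^m × ℝ | F(y, s) ≥ 1} carry the subspace topology. Then L is homeomorphic to the product V × D, where V = {y ∈ ℝ^m | r(y) = 0} carries the subspace topology of ℝ^m and D = ({−1, 1} : set of reals) carries the subspace topology of ℝ; a homeomorphism is induced by the identity map (y, s) ↦ (y, s). -/
/-- The real zero set `V = {y ∈ ℝ^m | r(y) = 0}`. -/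
def zeroSetV (m : ℕ) (r : MvPolynomial (Fin m) ℝ) : Set (Fin m → ℝ) :=
  {y | MvPolynomial.eval y r = 0}

lemma sheetL_eq_prod (m : ℕ) (r : MvPolynomial (Fin m) ℝ) :
    sheetL m r = (zeroSetV m r) ×ˢ ({-1, 1} : Set ℝ) := by
  ext ⟨y, s⟩
  simp only [sheetL, twoSheet, zeroSetV, Set.mem_setOf_eq, Set.mem_prod,
    Set.mem_insert_iff, Set.mem_singleton_iff]
  constructor
  · intro h
    have h1 : (MvPolynomial.eval y r) ^ 2 + (s ^ 2 - 1) ^ 2 ≤ 0 := by linarith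
    have h2 : (MvPolynomial.eval y r) ^ 2 = 0 ∧ (s ^ 2 - 1) ^ 2 = 0 := by
      constructor <;> nlinarith [sq_nonneg (MvPolynomial.eval y r), sq_nonneg (s ^ 2 - 1)]
    have hr : MvPolynomial.eval y r = 0 := by
      have := pow_eq_zero_iff (n := 2) (by norm_num) |>.mp h2.1
      exact this
    have hs : s ^ 2 = 1 := by
      have := pow_eq_zero_iff (n := 2) (by norm_num) |>.mp h2.2
      linarith
    refine ⟨hr, ?_⟩
    have : (s - 1) * (s + 1) = 0 := by ring_nf; linarith
    rcases mul_eq_zero.mp this with h | h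
    · right; linarith
    · left; linarith
  · rintro ⟨hr, hs⟩
    have : s ^ 2 = 1 := by rcases hs with h | h <;> rw [h] <;> ring
    rw [hr, this]; norm_num

/-- `L` (with the subspace topology) is homeomorphic to
`V × D` where `D = {−1, 1} ⊆ ℝ`, via a homeomorphism induced by the identity
map `(y, s) ↦ (y, s)`. -/
theorem stmt9 (m : ℕ) (r : MvPolynomial (Fin m) ℝ) :
    ∃ h : sheetL m r ≃ₜ zeroSetV m r × ({-1, 1} : Set ℝ),
      ∀ p : sheetL m r,
        ((h p).1 : Fin m → ℝ) = (p : (Fin m → ℝ) × ℝ).1 ∧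
        ((h p).2 : ℝ) = (p : (Fin m → ℝ) × ℝ).2 := by
  refine ⟨(Homeomorph.setCongr (sheetL_eq_prod m r)).trans
    (Homeomorph.Set.prod (zeroSetV m r) ({-1, 1} : Set ℝ)), fun p => ⟨rfl, rfl⟩⟩
end

section
/- Let r be a multivariate real polynomial in m variables, let n ≥ 1, and define F_n on (ℝ^m × ℝ)^n by F_n((y⁽¹⁾, s⁽¹⁾), …, (y⁽ⁿ⁾, s⁽ⁿ⁾)) = 1 − Σᵢ (r(y⁽ⁱ⁾)² + ((s⁽ⁱ⁾)² − 1)²), with super-level set L_n = {x | F_n(x) ≥ 1}. Suppose y₀ ∈ ℝ^m satisfies r(y₀) = 0. For each sign vector ε : {1, …, n} → {−1, 1}, the point p_ε whose i-th block is (y₀, ε(i)) lies in L_n, and for distinct sign vectors ε ≠ ε′ the connected components of p_ε and p_{ε′} within L_n are distinct. Consequently L_n has at least 2ⁿ connected components. -/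
/-- The `n`-block function
`F_n(x) = 1 − Σᵢ (r(y⁽ⁱ⁾)² + ((s⁽ⁱ⁾)² − 1)²)` on `(ℝ^m × ℝ)^n`. -/
noncomputable def nBlockF (m n : ℕ) (r : MvPolynomial (Fin m) ℝ)
    (x : Fin n → (Fin m → ℝ) × ℝ) : ℝ :=
  1 - ∑ i : Fin n, ((MvPolynomial.eval (x i).1 r) ^ 2 + ((x i).2 ^ 2 - 1) ^ 2)

/-- The super-level set `L_n = {x ∈ (ℝ^m × ℝ)^n | F_n(x) ≥ 1}`. -/
noncomputable def nBlockL (m n : ℕ) (r : MvPolynomial (Fin m) ℝ) :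
    Set (Fin n → (Fin m → ℝ) × ℝ) :=
  {x | nBlockF m n r x ≥ 1}

/-- if `r(y₀) = 0`, then for each sign vector
`ε : Fin n → {−1, 1}` the point `p_ε = (i ↦ (y₀, ε i))` lies in `L_n`,
distinct sign vectors yield distinct connected components within `L_n`,
and consequently `L_n` has at least `2^n` connected components. -/
theorem stmt11 (m n : ℕ) (hn : 1 ≤ n) (r : MvPolynomial (Fin m) ℝ)
    (y₀ : Fin m → ℝ) (h : MvPolynomial.eval y₀ r = 0) :
    (∀ ε : Fin n → ℝ, (∀ i, ε i = 1 ∨ ε i = -1) →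
      (fun i => (y₀, ε i)) ∈ nBlockL m n r) ∧
    (∀ ε ε' : Fin n → ℝ, (∀ i, ε i = 1 ∨ ε i = -1) → (∀ i, ε' i = 1 ∨ ε' i = -1) →
      ε ≠ ε' →
      connectedComponentIn (nBlockL m n r) (fun i => (y₀, ε i)) ≠
        connectedComponentIn (nBlockL m n r) (fun i => (y₀, ε' i))) ∧
    (2 : Cardinal) ^ n ≤
      Cardinal.mk {C : Set (Fin n → (Fin m → ℝ) × ℝ) |
        ∃ p ∈ nBlockL m n r, C = connectedComponentIn (nBlockL m n r) p} := by
  have hmem : ∀ ε : Fin n → ℝ, (∀ i, ε i = 1 ∨ ε i = -1) →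
      (fun i => (y₀, ε i)) ∈ nBlockL m n r := by
    intro ε hε
    have hsum : (∑ i : Fin n,
        ((MvPolynomial.eval y₀ r) ^ 2 + ((ε i) ^ 2 - 1) ^ 2)) = 0 :=
      Finset.sum_eq_zero fun i _ => by rcases hε i with h1 | h1 <;> rw [h, h1] <;> ring
    simp only [nBlockL, nBlockF, Set.mem_setOf_eq]
    rw [hsum]
    norm_num
  have hLsub : ∀ x ∈ nBlockL m n r, ∀ i, (x i).2 = 1 ∨ (x i).2 = -1 := by
    intro x hx i
    simp only [nBlockL, nBlockF, Set.mem_setOf_eq] at hx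
    have hnn : ∀ j ∈ Finset.univ,
        0 ≤ (MvPolynomial.eval (x j).1 r) ^ 2 + ((x j).2 ^ 2 - 1) ^ 2 :=
      fun j _ => by positivity
    have hs : ∑ j : Fin n,
        ((MvPolynomial.eval (x j).1 r) ^ 2 + ((x j).2 ^ 2 - 1) ^ 2) = 0 :=
      le_antisymm (by linarith) (Finset.sum_nonneg hnn)
    have hz := (Finset.sum_eq_zero_iff_of_nonneg hnn).mp hs i (Finset.mem_univ i)
    have h3 : ((x i).2 - 1) * ((x i).2 + 1) = 0 := by
      nlinarith [sq_nonneg (MvPolynomial.eval (x i).1 r), sq_nonneg ((x i).2 ^ 2 - 1)]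
    rcases mul_eq_zero.mp h3 with h4 | h4
    · left; linarith
    · right; linarith
  have hdist : ∀ ε ε' : Fin n → ℝ, (∀ i, ε i = 1 ∨ ε i = -1) →
      (∀ i, ε' i = 1 ∨ ε' i = -1) → ε ≠ ε' →
      connectedComponentIn (nBlockL m n r) (fun i => (y₀, ε i)) ≠
        connectedComponentIn (nBlockL m n r) (fun i => (y₀, ε' i)) := by
    intro ε ε' hε hε' hne heq
    obtain ⟨i, hi⟩ := Function.ne_iff.mp hne
    set C := connectedComponentIn (nBlockL m n r) (fun i => (y₀, ε i)) with hC
    have hpε : (fun i => (y₀, ε i)) ∈ C := mem_connectedComponentIn (hmem ε hε)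
    have hpε' : (fun i => (y₀, ε' i)) ∈ C := heq ▸ mem_connectedComponentIn (hmem ε' hε')
    have hconn : IsPreconnected C :=
      ((isConnected_connectedComponentIn_iff.mpr (hmem ε hε))).isPreconnected
    have hcont : Continuous (fun x : Fin n → (Fin m → ℝ) × ℝ => (x i).2) :=
      continuous_snd.comp (continuous_apply i)
    have himg : IsPreconnected ((fun x : Fin n → (Fin m → ℝ) × ℝ => (x i).2) '' C) :=
      hconn.image _ hcont.continuousOn
    have hord := himg.ordConnected
    have h1 : ε i ∈ (fun x : Fin n → (Fin m → ℝ) × ℝ => (x i).2) '' C := ⟨_, hpε, rfl⟩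
    have h2 : ε' i ∈ (fun x : Fin n → (Fin m → ℝ) × ℝ => (x i).2) '' C := ⟨_, hpε', rfl⟩
    have hsub := connectedComponentIn_subset (nBlockL m n r) (fun i => (y₀, ε i))
    have h0 : (0 : ℝ) ∈ (fun x : Fin n → (Fin m → ℝ) × ℝ => (x i).2) '' C := by
      rcases hε i with ha | ha <;> rcases hε' i with hb | hb
      · exact absurd (ha.trans hb.symm) hi
      · exact hord.out h2 h1 ⟨by rw [hb]; norm_num, by rw [ha]; norm_num⟩
      · exact hord.out h1 h2 ⟨by rw [ha]; norm_num, by rw [hb]; norm_num⟩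
      · exact absurd (ha.trans hb.symm) hi
    obtain ⟨x, hxC, hx0⟩ := h0
    have hx0' : (x i).2 = 0 := hx0
    rcases hLsub x (hsub hxC) i with h' | h' <;> rw [hx0'] at h' <;> norm_num at h'
  refine ⟨hmem, hdist, ?_⟩
  have hεb : ∀ b : Fin n → Bool, ∀ i,
      (if b i then (1 : ℝ) else -1) = 1 ∨ (if b i then (1 : ℝ) else -1) = -1 := by
    intro b i; by_cases hb : b i <;> simp [hb]
  let f : (Fin n → Bool) → {C : Set (Fin n → (Fin m → ℝ) × ℝ) |
      ∃ p ∈ nBlockL m n r, C = connectedComponentIn (nBlockL m n r) p} :=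
    fun b => ⟨connectedComponentIn (nBlockL m n r)
        (fun i => (y₀, if b i then (1 : ℝ) else -1)),
      ⟨_, hmem _ (hεb b), rfl⟩⟩
  have hinjf : Function.Injective f := by
    intro b b' hbb
    by_contra hne
    have hεne : (fun i => (if b i then (1 : ℝ) else -1)) ≠
        (fun i => if b' i then (1 : ℝ) else -1) := by
      obtain ⟨i, hi⟩ := Function.ne_iff.mp hne
      intro hfe
      have hci := congrFun hfe i
      cases hb : b i <;> cases hb' : b' i <;>
        simp [hb, hb'] at hci hi <;> norm_num at hci
    exact hdist _ _ (hεb b) (hεb b') hεne (Subtype.ext_iff.mp hbb)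
  have hle := Cardinal.mk_le_of_injective hinjf
  have hcard : Cardinal.mk (Fin n → Bool) = (2 : Cardinal) ^ n := by
    simp [Cardinal.mk_arrow]
  rwa [hcard] at hle
end

section
/- Let r be a multivariate real polynomial in m variables, define G(y, u, v) = 1 − (r(y)² + (u² + v² − 1)²), and let M = {(y, u, v) ∈ ℝ^m × ℝ × ℝ | G(y, u, v) ≥ 1} carry the subspace topology. If r has a real root (there exists a ∈ ℝ^m with r(a) = 0), then M is nonempty and M is not simply connected; in particular M contains a loop that is not null-homotopic in M (the loop θ ↦ (a, cos θ, sin θ) is such a loop). -/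
/-!
`G ≥ 1` forces `r(y) = 0` and `u² + v² = 1`, so `M` is `r⁻¹(0) × S¹` and the projection to the
`(u, v)`-coordinate is a continuous map `M → S¹` sending the loop `t ↦ (a, cos 2πt, sin 2πt)` to
the standard generator of `π₁(S¹)`. Lifting through the covering `ℝ → S¹, θ ↦ e^{iθ}`, a
null-homotopy of that generator would force the lifts `t ↦ 2πt` and `t ↦ 0` to have the same
endpoint.
-/

/-- The circle-product function `G(y, u, v) = 1 − (r(y)² + (u² + v² − 1)²)`. -/
noncomputable def circleG (m : ℕ) (r : MvPolynomial (Fin m) ℝ)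
    (p : (Fin m → ℝ) × ℝ × ℝ) : ℝ :=
  1 - ((MvPolynomial.eval p.1 r) ^ 2 + (p.2.1 ^ 2 + p.2.2 ^ 2 - 1) ^ 2)

/-- The super-level set `M = {(y, u, v) | G(y, u, v) ≥ 1}`. -/
noncomputable def circleM (m : ℕ) (r : MvPolynomial (Fin m) ℝ) :
    Set ((Fin m → ℝ) × ℝ × ℝ) :=
  {p | circleG m r p ≥ 1}

open Real unitInterval

theorem IsCoveringMap.apply_one_eq_of_homotopicRel_comp {E X : Type*} [TopologicalSpace E]
    [TopologicalSpace X] {p : E → X} (cov : IsCoveringMap p) {Γ₀ Γ₁ : C(I, E)}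
    (h₀ : Γ₀ 0 = Γ₁ 0)
    (h : (ContinuousMap.comp ⟨p, cov.continuous⟩ Γ₀).HomotopicRel
      (.comp ⟨p, cov.continuous⟩ Γ₁) {0, 1}) :
    Γ₀ 1 = Γ₁ 1 :=
  ((cov.homotopicRel_iff_comp ⟨0, .inl rfl, h₀⟩).2 h).fst_eq_snd (.inr rfl)

theorem Path.not_homotopic_refl_of_comp_eq_circleExp {X : Type*} [TopologicalSpace X] {x : X}
    (f : C(X, Circle)) (γ : Path x x) (hγ : ∀ t : I, f (γ t) = Circle.exp (2 * π * t)) :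
    ¬γ.Homotopic (Path.refl x) := by
  intro hnull
  let lift : C(I, ℝ) := ⟨fun t ↦ 2 * π * t, by fun_prop⟩
  have hfx : f x = 1 := by simpa using hγ 0
  have hγ_lift : ContinuousMap.comp ⟨_, Circle.isCoveringMap_exp.continuous⟩ lift =
      (γ.map f.continuous).toContinuousMap := by
    ext t
    exact congrArg Subtype.val (hγ t).symm
  have hrefl_lift : ContinuousMap.comp ⟨_, Circle.isCoveringMap_exp.continuous⟩ (.const I 0) =
      ((Path.refl x).map f.continuous).toContinuousMap := by
    ext t
    simp [hfx]
  have hendpoint := Circle.isCoveringMap_exp.apply_one_eq_of_homotopicRel_comp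
    (Γ₀ := lift) (Γ₁ := .const I 0) (by simp [lift])
    (by rw [hγ_lift, hrefl_lift]; exact hnull.map f)
  simp [lift, pi_ne_zero] at hendpoint

noncomputable section

variable {m : ℕ} {r : MvPolynomial (Fin m) ℝ} {a : Fin m → ℝ}

theorem mem_circleM_iff {p : (Fin m → ℝ) × ℝ × ℝ} :
    p ∈ circleM m r ↔ MvPolynomial.eval p.1 r = 0 ∧ p.2.1 ^ 2 + p.2.2 ^ 2 = 1 := by
  simp only [circleM, circleG, Set.mem_ofPred_eq, ge_iff_le]
  constructor
  · intro hle
    have hsum : MvPolynomial.eval p.1 r ^ 2 + (p.2.1 ^ 2 + p.2.2 ^ 2 - 1) ^ 2 = 0 :=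
      le_antisymm (by linarith) (by positivity)
    rw [add_eq_zero_iff_of_nonneg (sq_nonneg _) (sq_nonneg _)] at hsum
    exact ⟨pow_eq_zero_iff two_ne_zero |>.1 hsum.1,
      by linarith [pow_eq_zero_iff two_ne_zero |>.1 hsum.2]⟩
  · rintro ⟨h₁, h₂⟩
    simp [h₁, h₂]

theorem mem_circleM_of_eval_eq_zero (h : MvPolynomial.eval a r = 0) (θ : ℝ) :
    (a, cos θ, sin θ) ∈ circleM m r :=
  mem_circleM_iff.2 ⟨h, cos_sq_add_sin_sq θ⟩

def circleM.toCircle (m : ℕ) (r : MvPolynomial (Fin m) ℝ) : C(circleM m r, Circle) where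
  toFun p := ⟨⟨p.1.2.1, p.1.2.2⟩, by
    simp [Submonoid.unitSphere, Complex.norm_def, Complex.normSq_apply, ← sq,
      (mem_circleM_iff.1 p.2).2]⟩
  continuous_toFun :=
    (Complex.equivRealProdCLM.symm.continuous.comp (by fun_prop)).subtype_mk _

def circleM.loop (h : MvPolynomial.eval a r = 0) :
    Path (⟨_, mem_circleM_of_eval_eq_zero h 0⟩ : circleM m r)
      ⟨_, mem_circleM_of_eval_eq_zero h 0⟩ where
  toFun t := ⟨_, mem_circleM_of_eval_eq_zero h (2 * π * t)⟩
  continuous_toFun := by fun_prop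
  source' := by simp
  target' := by simp

theorem circleM.toCircle_loop (h : MvPolynomial.eval a r = 0) (t : I) :
    circleM.toCircle m r (circleM.loop h t) = Circle.exp (2 * π * t) := by
  ext1
  change (⟨cos (2 * π * t), sin (2 * π * t)⟩ : ℂ) = Complex.exp ((2 * π * t : ℝ) * Complex.I)
  exact Complex.ext (Complex.exp_ofReal_mul_I_re _).symm (Complex.exp_ofReal_mul_I_im _).symm

end

/-- if `r` has a real root `a`, then `M` is nonempty, `M` (with
the subspace topology) is not simply connected, and in particular `M` contains
a loop that is not null-homotopic in `M` — namely the loop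
`θ ↦ (a, cos θ, sin θ)` (parametrised over the unit interval as
`t ↦ (a, cos (2πt), sin (2πt))`). -/
theorem stmt14 (m : ℕ) (r : MvPolynomial (Fin m) ℝ)
    (a : Fin m → ℝ) (h : MvPolynomial.eval a r = 0) :
    (circleM m r).Nonempty ∧
    ¬SimplyConnectedSpace (circleM m r) ∧
    ∃ (x : circleM m r) (γ : Path x x),
      (∀ t : unitInterval,
        (γ t : (Fin m → ℝ) × ℝ × ℝ) =
          (a, Real.cos (2 * Real.pi * t), Real.sin (2 * Real.pi * t))) ∧
      ¬γ.Homotopic (Path.refl x) := by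
  have hloop := (circleM.loop h).not_homotopic_refl_of_comp_eq_circleExp _
    (circleM.toCircle_loop h)
  refine ⟨⟨_, mem_circleM_of_eval_eq_zero h 0⟩, fun _ ↦ ?_, _, circleM.loop h, fun _ ↦ rfl, hloop⟩
  exact hloop (SimplyConnectedSpace.paths_homotopic _ _)
end
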